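/- Let $K$ be a square of side length $l$ in the plane and let $u \in H^1(K)$. Then $\|u\|_{L^2(K)}^2 \le l^2 \langle u \rangle_K^2 + \frac{l^2}{3}\|\nabla u\|_{L^2(K)}^2$, where $\langle u \rangle_K = \frac{1}{|K|}\int_K u(x)\,dx$ denotes the average of $u$ over $K$. -/

import Mathlib

/-!
For `x, y` in the square, go from `x` to `y` through the corner `(y.1, x.2)`. On each of the two
segments the fundamental theorem of calculus and Cauchy–Schwarz bound the squared increment of `u`
by the length of the segment times the energy of `u` on the whole slice of the square containing it.
Integrating over `x, y ∈ K` and using `∫∫ (u x - u y)² = 2|K| ∫ u² - 2 (∫ u)²` on the left and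
`∫₀ˡ ∫₀ˡ |s - t| = l³/3` on the right gives the inequality.
-/

open MeasureTheory Set

section Variance

variable {α : Type*} [MeasurableSpace α] {μ : Measure α} [IsFiniteMeasure μ] {f : α → ℝ}

theorem integral_integral_sub_sq (hf : MemLp f 2 μ) :
    ∫ x, ∫ y, (f x - f y) ^ 2 ∂μ ∂μ
      = 2 * μ.real univ * ∫ x, f x ^ 2 ∂μ - 2 * (∫ x, f x ∂μ) ^ 2 := by
  have hf1 : Integrable f μ := hf.integrable one_le_two
  have hf2 : Integrable (fun x ↦ f x ^ 2) μ := hf.integrable_sq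
  have inner (x : α) : ∫ y, (f x - f y) ^ 2 ∂μ
      = μ.real univ * f x ^ 2 - 2 * (∫ y, f y ∂μ) * f x + ∫ y, f y ^ 2 ∂μ := by
    have hexp : (fun y ↦ (f x - f y) ^ 2) = fun y ↦ (f x ^ 2 - 2 * f x * f y) + f y ^ 2 := by
      ext y; ring
    rw [hexp, integral_add (f := fun y ↦ f x ^ 2 - 2 * f x * f y)
        ((integrable_const _).sub (hf1.const_mul _)) hf2,
      integral_sub (integrable_const _) (hf1.const_mul _), integral_const, integral_const_mul,
      smul_eq_mul]
    ring
  simp_rw [inner]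
  rw [integral_add (f := fun x ↦ μ.real univ * f x ^ 2 - 2 * (∫ y, f y ∂μ) * f x)
      ((hf2.const_mul _).sub (hf1.const_mul _)) (integrable_const _),
    integral_sub (hf2.const_mul _) (hf1.const_mul _), integral_const_mul, integral_const_mul,
    integral_const, smul_eq_mul]
  ring

theorem sq_integral_le_measureReal_mul_integral_sq (hf : MemLp f 2 μ) :
    (∫ x, f x ∂μ) ^ 2 ≤ μ.real univ * ∫ x, f x ^ 2 ∂μ := by
  have h := integral_integral_sub_sq hf
  have : 0 ≤ ∫ x, ∫ y, (f x - f y) ^ 2 ∂μ ∂μ :=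
    integral_nonneg fun x ↦ integral_nonneg fun y ↦ sq_nonneg _
  linarith

end Variance

theorem sq_intervalIntegral_le {g : ℝ → ℝ} {s t : ℝ} (hst : s ≤ t)
    (hg : ContinuousOn g (Icc s t)) :
    (∫ x in s..t, g x) ^ 2 ≤ (t - s) * ∫ x in s..t, g x ^ 2 := by
  have hmem : MemLp g 2 (volume.restrict (Ioc s t)) :=
    (memLp_two_iff_integrable_sq ((hg.mono Ioc_subset_Icc_self).aestronglyMeasurable
      measurableSet_Ioc)).2 ((hg.pow 2).integrableOn_Icc.mono_set Ioc_subset_Icc_self)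
  simpa [intervalIntegral.integral_of_le hst, hst] using
    sq_integral_le_measureReal_mul_integral_sq hmem

theorem sq_sub_le_abs_mul_integral_deriv_sq {f f' : ℝ → ℝ} {a b s t : ℝ}
    (hf : ∀ x ∈ Icc a b, HasDerivAt f (f' x) x) (hf' : ContinuousOn f' (Icc a b))
    (hs : s ∈ Icc a b) (ht : t ∈ Icc a b) :
    (f t - f s) ^ 2 ≤ |t - s| * ∫ x in Icc a b, f' x ^ 2 := by
  wlog hst : s ≤ t generalizing s t
  · rw [← neg_sub, neg_sq, abs_sub_comm]
    exact this ht hs (le_of_not_ge hst)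
  have hsub : Icc s t ⊆ Icc a b := Icc_subset_Icc hs.1 ht.2
  have hftc : ∫ x in s..t, f' x = f t - f s :=
    intervalIntegral.integral_eq_sub_of_hasDerivAt
      (fun x hx ↦ hf x (hsub (uIcc_of_le hst ▸ hx)))
      ((hf'.mono (uIcc_of_le hst ▸ hsub)).intervalIntegrable)
  have hmono : ∫ x in s..t, f' x ^ 2 ≤ ∫ x in Icc a b, f' x ^ 2 := by
    rw [intervalIntegral.integral_of_le hst]
    exact setIntegral_mono_set (hf'.pow 2).integrableOn_Icc
      (ae_of_all _ fun x ↦ sq_nonneg _) (Ioc_subset_Icc_self.trans hsub).eventuallyLE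
  calc (f t - f s) ^ 2 = (∫ x in s..t, f' x) ^ 2 := by rw [hftc]
    _ ≤ (t - s) * ∫ x in s..t, f' x ^ 2 := sq_intervalIntegral_le hst (hf'.mono hsub)
    _ ≤ |t - s| * ∫ x in Icc a b, f' x ^ 2 := by
      rw [abs_of_nonneg (sub_nonneg.2 hst)]
      exact mul_le_mul_of_nonneg_left hmono (sub_nonneg.2 hst)

theorem intervalIntegral_abs_sub {a b s : ℝ} (has : a ≤ s) (hsb : s ≤ b) :
    ∫ t in a..b, |s - t| = ((s - a) ^ 2 + (b - s) ^ 2) / 2 := by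
  have hi (u v : ℝ) : IntervalIntegrable (fun t ↦ |s - t|) volume u v :=
    (continuous_const.sub continuous_id).abs.intervalIntegrable u v
  have hleft : ∫ t in a..s, |s - t| = ∫ t in a..s, (s - t) :=
    intervalIntegral.integral_congr fun t ht ↦ by
      rw [uIcc_of_le has] at ht
      exact abs_of_nonneg (sub_nonneg.2 ht.2)
  have hright : ∫ t in s..b, |s - t| = ∫ t in s..b, (t - s) :=
    intervalIntegral.integral_congr fun t ht ↦ by
      rw [uIcc_of_le hsb] at ht
      exact abs_sub_comm s t ▸ abs_of_nonneg (sub_nonneg.2 ht.1)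
  rw [← intervalIntegral.integral_add_adjacent_intervals (hi a s) (hi s b), hleft, hright,
    intervalIntegral.integral_sub intervalIntegrable_const intervalIntegral.intervalIntegrable_id,
    intervalIntegral.integral_sub intervalIntegral.intervalIntegrable_id intervalIntegrable_const]
  simp only [integral_id, intervalIntegral.integral_const, smul_eq_mul]
  ring

theorem setIntegral_Icc_setIntegral_Icc_abs_sub {a b : ℝ} (hab : a ≤ b) :
    ∫ s in Icc a b, ∫ t in Icc a b, |s - t| = (b - a) ^ 3 / 3 := by
  have hinner : EqOn (fun s ↦ ∫ t in Icc a b, |s - t|)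
      (fun s ↦ ((s - a) ^ 2 + (b - s) ^ 2) / 2) (Icc a b) := fun s hs ↦ by
    simp only [integral_Icc_eq_integral_Ioc, ← intervalIntegral.integral_of_le hab]
    exact intervalIntegral_abs_sub hs.1 hs.2
  have hderiv (s : ℝ) : HasDerivAt (fun s ↦ ((s - a) ^ 3 - (b - s) ^ 3) / 6)
      (((s - a) ^ 2 + (b - s) ^ 2) / 2) s :=
    ((((hasDerivAt_id' s).sub_const a).fun_pow 3).fun_sub
      (((hasDerivAt_id' s).const_sub b).fun_pow 3)).div_const 6 |>.congr_deriv (by norm_num; ring)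
  rw [setIntegral_congr_fun measurableSet_Icc hinner, integral_Icc_eq_integral_Ioc,
    ← intervalIntegral.integral_of_le hab,
    intervalIntegral.integral_eq_sub_of_hasDerivAt (fun s _ ↦ hderiv s)
      (by apply Continuous.intervalIntegrable; fun_prop)]
  ring

theorem integral_integral_prod_mul {α β L : Type*} [MeasurableSpace α] [MeasurableSpace β]
    [RCLike L] {μ : Measure α} {ν : Measure β} [SFinite μ] [SFinite ν]
    (f : α → α → L) (g : β → β → L) :
    ∫ x, ∫ y, f x.1 y.1 * g x.2 y.2 ∂μ.prod ν ∂μ.prod ν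
      = (∫ x, ∫ y, f x y ∂μ ∂μ) * ∫ x, ∫ y, g x y ∂ν ∂ν := by
  simp_rw [integral_prod_mul (μ := μ) (ν := ν)]
  exact integral_prod_mul (fun x ↦ ∫ y, f x y ∂μ) (fun x ↦ ∫ y, g x y ∂ν)

theorem Continuous.setIntegral_prod_eq {X Y E : Type*} [TopologicalSpace X] [MeasurableSpace X]
    [OpensMeasurableSpace X] [T2Space X] [TopologicalSpace Y] [MeasurableSpace Y]
    [OpensMeasurableSpace Y] [T2Space Y] [SecondCountableTopologyEither X Y]
    {μ : Measure X} {ν : Measure Y} [IsFiniteMeasureOnCompacts μ] [IsFiniteMeasureOnCompacts ν]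
    [SFinite μ] [SFinite ν] [NormedAddCommGroup E] [NormedSpace ℝ E] {F : X × Y → E}
    (hF : Continuous F) {s : Set X} {t : Set Y}
    (hs : IsCompact s) (ht : IsCompact t) :
    ∫ z in s ×ˢ t, F z ∂μ.prod ν = ∫ x in s, ∫ y in t, F (x, y) ∂ν ∂μ :=
  setIntegral_prod F (hF.continuousOn.integrableOn_compact (hs.prod ht))

theorem DifferentiableAt.hasDerivAt_mk_const {E : Type*} [NormedAddCommGroup E] [NormedSpace ℝ E]
    {u : ℝ × ℝ → E} {t c : ℝ} (hu : DifferentiableAt ℝ u (t, c)) :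
    HasDerivAt (fun r ↦ u (r, c)) (fderiv ℝ u (t, c) (1, 0)) t :=
  hu.hasFDerivAt.comp_hasDerivAt t ((hasDerivAt_id t).prodMk (hasDerivAt_const t c))

theorem DifferentiableAt.hasDerivAt_const_mk {E : Type*} [NormedAddCommGroup E] [NormedSpace ℝ E]
    {u : ℝ × ℝ → E} {c t : ℝ} (hu : DifferentiableAt ℝ u (c, t)) :
    HasDerivAt (fun r ↦ u (c, r)) (fderiv ℝ u (c, t) (0, 1)) t :=
  hu.hasFDerivAt.comp_hasDerivAt t ((hasDerivAt_const t c).prodMk (hasDerivAt_id t))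

section Rectangle

variable {u : ℝ × ℝ → ℝ} {a b c d : ℝ}

theorem sq_sub_le_of_mem_Icc_prod_Icc (hu : ContDiff ℝ 1 u) {x y : ℝ × ℝ}
    (hx : x ∈ Icc a b ×ˢ Icc c d) (hy : y ∈ Icc a b ×ˢ Icc c d) :
    (u x - u y) ^ 2 ≤ 2 * |x.1 - y.1| * (∫ t in Icc a b, fderiv ℝ u (t, x.2) (1, 0) ^ 2)
      + 2 * |x.2 - y.2| * ∫ t in Icc c d, fderiv ℝ u (y.1, t) (0, 1) ^ 2 := by
  have hdiff := hu.differentiable one_ne_zero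
  have hcont := hu.continuous_fderiv one_ne_zero
  have h₁ := sq_sub_le_abs_mul_integral_deriv_sq (f := fun r ↦ u (r, x.2))
    (fun t _ ↦ (hdiff (t, x.2)).hasDerivAt_mk_const) (by fun_prop) hy.1 hx.1
  have h₂ := sq_sub_le_abs_mul_integral_deriv_sq (f := fun r ↦ u (y.1, r))
    (fun t _ ↦ (hdiff (y.1, t)).hasDerivAt_const_mk) (by fun_prop) hy.2 hx.2
  calc (u x - u y) ^ 2 = ((u (x.1, x.2) - u (y.1, x.2)) + (u (y.1, x.2) - u (y.1, y.2))) ^ 2 := by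
        ring
    _ ≤ 2 * ((u (x.1, x.2) - u (y.1, x.2)) ^ 2 + (u (y.1, x.2) - u (y.1, y.2)) ^ 2) := add_sq_le
    _ ≤ _ := by linarith

theorem setIntegral_setIntegral_abs_sub_fst_mul (g : ℝ → ℝ) (hab : a ≤ b) (hcd : c ≤ d) :
    ∫ x in Icc a b ×ˢ Icc c d, ∫ y in Icc a b ×ˢ Icc c d, |x.1 - y.1| * g x.2
      = (b - a) ^ 3 / 3 * ((d - c) * ∫ s in Icc c d, g s) := by
  rw [Measure.volume_eq_prod, ← Measure.prod_restrict,
    integral_integral_prod_mul (fun s t ↦ |s - t|) (fun s _ ↦ g s),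
    setIntegral_Icc_setIntegral_Icc_abs_sub hab]
  simp only [integral_const, smul_eq_mul, measureReal_restrict_apply_univ,
    Real.volume_real_Icc_of_le hcd, integral_const_mul]

theorem setIntegral_setIntegral_mul_abs_sub_snd (g : ℝ → ℝ) (hab : a ≤ b) (hcd : c ≤ d) :
    ∫ x in Icc a b ×ˢ Icc c d, ∫ y in Icc a b ×ˢ Icc c d, g y.1 * |x.2 - y.2|
      = (b - a) * (∫ s in Icc a b, g s) * ((d - c) ^ 3 / 3) := by
  rw [Measure.volume_eq_prod, ← Measure.prod_restrict,
    integral_integral_prod_mul (fun _ t ↦ g t) (fun s t ↦ |s - t|),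
    setIntegral_Icc_setIntegral_Icc_abs_sub hcd]
  simp only [integral_const, smul_eq_mul, measureReal_restrict_apply_univ,
    Real.volume_real_Icc_of_le hab]

theorem setIntegral_setIntegral_sq_sub_le (hu : ContDiff ℝ 1 u) (hab : a ≤ b) (hcd : c ≤ d) :
    ∫ x in Icc a b ×ˢ Icc c d, ∫ y in Icc a b ×ˢ Icc c d, (u x - u y) ^ 2
      ≤ 2 * (b - a) * (d - c) / 3 *
        ((b - a) ^ 2 * (∫ p in Icc a b ×ˢ Icc c d, fderiv ℝ u p (1, 0) ^ 2)
          + (d - c) ^ 2 * ∫ p in Icc a b ×ˢ Icc c d, fderiv ℝ u p (0, 1) ^ 2) := by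
  have hcont := hu.continuous_fderiv one_ne_zero
  have hI : IsCompact (Icc a b) := isCompact_Icc
  have hJ : IsCompact (Icc c d) := isCompact_Icc
  have hK := hI.prod hJ
  have hKK := hK.prod hK
  set G₁ : ℝ → ℝ := fun s ↦ ∫ t in Icc a b, fderiv ℝ u (t, s) (1, 0) ^ 2
  set G₂ : ℝ → ℝ := fun s ↦ ∫ t in Icc c d, fderiv ℝ u (s, t) (0, 1) ^ 2
  have hG₁ : Continuous G₁ := continuous_parametric_integral_of_continuous
    (f := fun s t ↦ fderiv ℝ u (t, s) (1, 0) ^ 2) (by fun_prop) hI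
  have hG₂ : Continuous G₂ := continuous_parametric_integral_of_continuous
    (f := fun s t ↦ fderiv ℝ u (s, t) (0, 1) ^ 2) (by fun_prop) hJ
  have hD₁ : ∫ p in Icc a b ×ˢ Icc c d, fderiv ℝ u p (1, 0) ^ 2 = ∫ s in Icc c d, G₁ s := by
    rw [Measure.volume_eq_prod, ← setIntegral_prod_swap]
    exact Continuous.setIntegral_prod_eq (by fun_prop) hJ hI
  have hD₂ : ∫ p in Icc a b ×ˢ Icc c d, fderiv ℝ u p (0, 1) ^ 2 = ∫ s in Icc a b, G₂ s :=
    Continuous.setIntegral_prod_eq (by fun_prop) hI hJ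
  have hB₁ : Continuous fun z : (ℝ × ℝ) × (ℝ × ℝ) ↦ |z.1.1 - z.2.1| * G₁ z.1.2 := by fun_prop
  have hB₂ : Continuous fun z : (ℝ × ℝ) × (ℝ × ℝ) ↦ G₂ z.2.1 * |z.1.2 - z.2.2| := by fun_prop
  have hΦ : Continuous fun z : (ℝ × ℝ) × (ℝ × ℝ) ↦ (u z.1 - u z.2) ^ 2 := by
    have := hu.continuous; fun_prop
  calc ∫ x in Icc a b ×ˢ Icc c d, ∫ y in Icc a b ×ˢ Icc c d, (u x - u y) ^ 2
      = ∫ z in (Icc a b ×ˢ Icc c d) ×ˢ (Icc a b ×ˢ Icc c d), (u z.1 - u z.2) ^ 2 :=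
        (hΦ.setIntegral_prod_eq hK hK).symm
    _ ≤ ∫ z in (Icc a b ×ˢ Icc c d) ×ˢ (Icc a b ×ˢ Icc c d),
          2 * (|z.1.1 - z.2.1| * G₁ z.1.2 + G₂ z.2.1 * |z.1.2 - z.2.2|) :=
        setIntegral_mono_on (hΦ.continuousOn.integrableOn_compact hKK)
          (((hB₁.add hB₂).const_mul 2).continuousOn.integrableOn_compact hKK)
          hKK.measurableSet fun z hz ↦ by linarith [sq_sub_le_of_mem_Icc_prod_Icc hu hz.1 hz.2]
    _ = 2 * ((∫ z in (Icc a b ×ˢ Icc c d) ×ˢ (Icc a b ×ˢ Icc c d), |z.1.1 - z.2.1| * G₁ z.1.2)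
          + ∫ z in (Icc a b ×ˢ Icc c d) ×ˢ (Icc a b ×ˢ Icc c d), G₂ z.2.1 * |z.1.2 - z.2.2|) := by
        rw [integral_const_mul, integral_add (hB₁.continuousOn.integrableOn_compact hKK)
          (hB₂.continuousOn.integrableOn_compact hKK)]
    _ = _ := by
        rw [Measure.volume_eq_prod (ℝ × ℝ) (ℝ × ℝ), hB₁.setIntegral_prod_eq hK hK,
          hB₂.setIntegral_prod_eq hK hK,
          setIntegral_setIntegral_abs_sub_fst_mul G₁ hab hcd,
          setIntegral_setIntegral_mul_abs_sub_snd G₂ hab hcd, hD₁, hD₂]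
        ring

theorem poincare_Icc_prod_Icc (hu : ContDiff ℝ 1 u) (hab : a ≤ b) (hcd : c ≤ d) :
    (b - a) * (d - c) * (∫ p in Icc a b ×ˢ Icc c d, u p ^ 2) - (∫ p in Icc a b ×ˢ Icc c d, u p) ^ 2
      ≤ (b - a) * (d - c) / 3 *
        ((b - a) ^ 2 * (∫ p in Icc a b ×ˢ Icc c d, fderiv ℝ u p (1, 0) ^ 2)
          + (d - c) ^ 2 * ∫ p in Icc a b ×ˢ Icc c d, fderiv ℝ u p (0, 1) ^ 2) := by
  have hK : IsCompact (Icc a b ×ˢ Icc c d) := isCompact_Icc.prod isCompact_Icc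
  have hvol : volume.real (Icc a b ×ˢ Icc c d) = (b - a) * (d - c) := by
    rw [Measure.volume_eq_prod, measureReal_prod_prod, Real.volume_real_Icc_of_le hab,
      Real.volume_real_Icc_of_le hcd]
  have hmem : MemLp u 2 (volume.restrict (Icc a b ×ˢ Icc c d)) :=
    (memLp_two_iff_integrable_sq hu.continuous.aestronglyMeasurable).2
      ((hu.continuous.pow 2).continuousOn.integrableOn_compact hK)
  have : IsFiniteMeasure (volume.restrict (Icc a b ×ˢ Icc c d)) :=
    isFiniteMeasure_restrict.2 hK.measure_lt_top.ne
  have hvar := integral_integral_sub_sq hmem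
  rw [measureReal_restrict_apply_univ, hvol] at hvar
  have hbound := setIntegral_setIntegral_sq_sub_le hu hab hcd
  linarith

end Rectangle

/-- Quantitative mean-value Poincaré inequality on a square of side `l`. -/
theorem poincare_square (l : ℝ) (hl : 0 < l) (a b : ℝ)
    (u : ℝ × ℝ → ℝ) (hu : ContDiff ℝ 1 u)
    (K : Set (ℝ × ℝ)) (hK : K = Set.Icc a (a + l) ×ˢ Set.Icc b (b + l)) :
    (∫ p in K, (u p)^2) ≤
      l^2 * ((1 / l^2) * ∫ p in K, u p)^2
      + l^2 / 3 * ∫ p in K, ((fderiv ℝ u p (1, 0))^2 + (fderiv ℝ u p (0, 1))^2) := by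
  subst hK
  have hcont := hu.continuous_fderiv one_ne_zero
  have hKc : IsCompact (Icc a (a + l) ×ˢ Icc b (b + l)) := isCompact_Icc.prod isCompact_Icc
  have h := poincare_Icc_prod_Icc hu (by linarith : a ≤ a + l) (by linarith : b ≤ b + l)
  simp only [add_sub_cancel_left] at h
  rw [integral_add ((Continuous.continuousOn (by fun_prop)).integrableOn_compact hKc)
    ((Continuous.continuousOn (by fun_prop)).integrableOn_compact hKc), mul_pow, div_pow, one_pow]
  field_simp
  linarith
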